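/- arXiv:2010.06361 — 2 statements merged into one kernel-verified Lean document; each statement's English description precedes it below -/
import Mathlib

section
/- Let λ be an infinite play with colouring ρ into a finite set C ⊂ ℕ, let Steps(λ) = {n₀ < n₁ < ⋯} be the set of positions after which the stack height never goes strictly lower, and define mcol_i = min{ρ(v_k) : n_i ≤ k ≤ n_{i+1}}. Then λ satisfies the parity condition (liminf of (ρ(v_i)) is even) if and only if liminf of the sequence (mcol_i) is even. -/
/-- An abstract pushdown automaton: a pushdown automaton whose stack alphabet
`A` may be infinite.  Stacks are words over `A` written top-first, ending with
the bottom-of-stack symbol `⊥`; each transition replaces the top letter by a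
word of length at most 2; `⊥` occurs only at the bottom and is never popped
nor rewritten. -/
structure APDA (Q A : Type) where
  bot : A
  delta : Q → A → Set (Q × List A)
  len_le : ∀ q a qu, qu ∈ delta q a → (Prod.snd qu : List A).length ≤ 2
  no_bot : ∀ q a qu, a ≠ bot → qu ∈ delta q a → bot ∉ (Prod.snd qu : List A)
  keep_bot : ∀ q qu, qu ∈ delta q bot →
    ∃ w, (Prod.snd qu : List A) = w ++ [bot] ∧ bot ∉ w

namespace APDA

variable {Q A : Type}

/-- One step of the abstract pushdown automaton on configurations `(q, s)`
(stack written top-first). -/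
def stepRel (M : APDA Q A) (c c' : Q × List A) : Prop :=
  ∃ a s u, c.2 = a :: s ∧ (c'.1, u) ∈ M.delta c.1 a ∧ c'.2 = u ++ s

end APDA

namespace Games

variable {V : Type}

def IsPlay (E : V → V → Prop) (v₀ : V) (p : ℕ → V) : Prop :=
  p 0 = v₀ ∧ ∀ i, E (p i) (p (i + 1))

def hist (p : ℕ → V) (i : ℕ) : List V :=
  (List.range (i + 1)).map p

def ValidStrat (E : V → V → Prop) (VP : V → Prop) (φ : List V → V) : Prop :=
  ∀ h v, h.getLast? = some v → VP v → E v (φ h)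

def Respects (VP : V → Prop) (φ : List V → V) (p : ℕ → V) : Prop :=
  ∀ i, VP (p i) → p (i + 1) = φ (hist p i)

/-- Éloïse (owning the vertices in `VE`) has a winning strategy from `v₀`
for the winning condition `Ω`. -/
def WinsFrom (E : V → V → Prop) (VE : V → Prop) (Ω : (ℕ → V) → Prop) (v₀ : V) : Prop :=
  ∃ φ : List V → V, ValidStrat E VE φ ∧
    ∀ p : ℕ → V, IsPlay E v₀ p → Respects VE φ p → Ω p

/-- The parity winning condition: the smallest colour seen infinitely often
(the `liminf` of the colour sequence) is even. -/
def ParityWin (ρ : V → ℕ) (p : ℕ → V) : Prop :=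
  Even (Filter.liminf (fun i => ρ (p i)) Filter.atTop)

end Games

open Games

open Filter in
private lemma stmt5_aux {u v : ℕ → ℕ} {k : ℕ → ℕ} (N : ℕ) (hu : ∀ n, u n ≤ N) (hv : ∀ n, v n ≤ N)
    (hk : Tendsto k atTop atTop)
    (hle : ∀ᶠ n in atTop, u (k n) ≤ v n) :
    liminf u atTop ≤ liminf v atTop := by
  have hb : ∀ (w : ℕ → ℕ), (atTop : Filter ℕ).IsBoundedUnder (· ≥ ·) w :=
    fun w => isBoundedUnder_of ⟨0, fun x => Nat.zero_le _⟩
  have hcob : ∀ (w : ℕ → ℕ), (∀ n, w n ≤ N) → (atTop : Filter ℕ).IsCoboundedUnder (· ≥ ·) w :=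
    fun w hw => (isBoundedUnder_of ⟨N, fun x => hw _⟩ :
      (atTop : Filter ℕ).IsBoundedUnder (· ≤ ·) w).isCobounded_flip
  have h1 : liminf u atTop ≤ liminf (u ∘ k) atTop := by
    rw [liminf_comp]
    refine liminf_le_liminf_of_le hk (hb _) ?_
    have := hcob (u ∘ k) (fun n => hu _)
    simpa [IsCoboundedUnder, Filter.map_map] using this
  exact h1.trans (liminf_le_liminf hle (hb _) (hcob _ hv))

/-- Let `λ = p` be an infinite play of an abstract pushdown automaton coloured
by `ρ` (through the control states, with finitely many colours), and let
`e 0 < e 1 < ⋯` enumerate `Steps(λ)`, the set of positions after which the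
stack height never goes strictly lower.  With
`mcol i = min { ρ(v_k) : e i ≤ k ≤ e (i+1) }`, the play satisfies the parity
condition (liminf of the colours is even) iff the liminf of `mcol` is even. -/
theorem stmt5 {Q A : Type} (M : APDA Q A) (ρ : Q → ℕ)
    (hfin : (Set.range fun q => ρ q).Finite)
    (p : ℕ → Q × List A)
    (hplay : ∀ i, M.stepRel (p i) (p (i + 1)))
    (e : ℕ → ℕ) (he : StrictMono e)
    (hmem : ∀ i j, e i ≤ j → (p (e i)).2.length ≤ (p j).2.length)
    (hsurj : ∀ m, (∀ j, m ≤ j → (p m).2.length ≤ (p j).2.length) → ∃ i, e i = m) :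
    (Even (Filter.liminf (fun i => ρ (p i).1) Filter.atTop) ↔
      Even (Filter.liminf
        (fun i => (Finset.Icc (e i) (e (i + 1))).inf'
          (Finset.nonempty_Icc.mpr (he (Nat.lt_succ_self i)).le)
          (fun k => ρ (p k).1))
        Filter.atTop)) := by
    classical
  obtain ⟨N, hN⟩ := hfin.bddAbove
  have hN' : ∀ q, ρ q ≤ N := fun q => hN ⟨q, rfl⟩
  set f : ℕ → ℕ := fun i => ρ (p i).1 with hf
  set g : ℕ → ℕ := fun i => (Finset.Icc (e i) (e (i + 1))).inf'
      (Finset.nonempty_Icc.mpr (he (Nat.lt_succ_self i)).le)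
      (fun k => ρ (p k).1) with hg
  have hfb : ∀ n, f n ≤ N := fun n => hN' _
  have hgb : ∀ n, g n ≤ N := by
    intro n
    have hmem' : e n ∈ Finset.Icc (e n) (e (n + 1)) :=
      Finset.mem_Icc.mpr ⟨le_refl _, (he (Nat.lt_succ_self n)).le⟩
    exact le_trans (Finset.inf'_le (b := e n) (fun k => ρ (p k).1) hmem') (hN' _)
  have heq : Filter.liminf f Filter.atTop = Filter.liminf g Filter.atTop := by
    apply le_antisymm
    · -- choose where the inf is attained
      have hch : ∀ i, ∃ j, j ∈ Finset.Icc (e i) (e (i + 1)) ∧ g i = f j := fun i =>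
        Finset.exists_mem_eq_inf' _ _
      choose k hk1 hk2 using hch
      have hke : ∀ i, e i ≤ k i := fun i => (Finset.mem_Icc.mp (hk1 i)).1
      have htend : Filter.Tendsto k Filter.atTop Filter.atTop :=
        Filter.tendsto_atTop_mono (fun i => le_trans he.le_apply (hke i)) Filter.tendsto_id
      exact stmt5_aux N hfb hgb htend
        (Filter.Eventually.of_forall fun i => (hk2 i).ge)
    · -- windows cover the tail
      set I : ℕ → ℕ := fun m => Nat.findGreatest (fun i => e i ≤ m) m with hI
      have hIle : ∀ m, e 0 ≤ m → e (I m) ≤ m := fun m hm =>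
        Nat.findGreatest_spec (P := fun i => e i ≤ m) (m := 0) (Nat.zero_le m) hm
      have hIlt : ∀ m, m ≤ e (I m + 1) := by
        intro m
        by_contra hcon
        push_neg at hcon
        have h1 : e (I m + 1) ≤ m := hcon.le
        have h2 : I m + 1 ≤ m := le_trans he.le_apply h1
        exact Nat.findGreatest_is_greatest (Nat.lt_succ_self _) h2 h1
      have htend : Filter.Tendsto I Filter.atTop Filter.atTop := by
        rw [Filter.tendsto_atTop]
        intro n
        filter_upwards [Filter.eventually_ge_atTop (e n)] with m hm
        exact Nat.le_findGreatest (le_trans he.le_apply hm) hm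
      refine stmt5_aux N hgb hfb htend ?_
      filter_upwards [Filter.eventually_ge_atTop (e 0)] with m hm
      exact Finset.inf'_le (b := m) (fun k => ρ (p k).1) (Finset.mem_Icc.mpr ⟨hIle m hm, hIlt m⟩)
  rw [heq]
end

section
/- Winning strategies in games are closed under the following composition: if Éloïse has a strategy from (q, ⊥ u a) winning the conditional game relative to R (treating reaching stack ⊥u with state in R as a win), and for each r ∈ R she has a winning strategy from (r, ⊥ u) in the parity game, then the strategy that plays the conditional strategy until (possibly) the stack first returns to ⊥u and then switches to the appropriate winning strategy is winning for her in the parity game from (q, ⊥ u a). -/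
open Games

namespace APDA

variable {Q A : Type}

/-- Conditional winning condition relative to the stack content `s₀` and the
set `R`: either the play never reaches a configuration with stack exactly
`s₀` and satisfies the parity condition, or the first configuration with
stack `s₀` has its control state in `R`. -/
def OmegaCondAt (ρ : Q → ℕ) (s₀ : List A) (R : Set Q) (p : ℕ → Q × List A) : Prop :=
  ((∀ i, (p i).2 ≠ s₀) ∧ Games.ParityWin (fun c : Q × List A => ρ c.1) p) ∨
  (∃ i, (p i).2 = s₀ ∧ (∀ j, j < i → (p j).2 ≠ s₀) ∧ (p i).1 ∈ R)

/-- Éloïse wins the abstract pushdown parity game from configuration `c`. -/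
def WinsParity (M : APDA Q A) (ρ : Q → ℕ) (QE : Q → Prop) (c : Q × List A) : Prop :=
  Games.WinsFrom M.stepRel (fun c : Q × List A => QE c.1)
    (Games.ParityWin (fun c : Q × List A => ρ c.1)) c

end APDA

open Classical in
/-- Composed strategy: follow `φ₀` until the first configuration whose stack
is `s₀` (with state in `R`), then switch to the corresponding `φr`. -/
noncomputable def compStrat {Q A : Type} (d : Q × List A) (s₀ : List A) (R : Set Q)
    (φ₀ : List (Q × List A) → Q × List A) (φr : Q → List (Q × List A) → Q × List A)
    (h : List (Q × List A)) : Q × List A :=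
  if H : ∃ k, k < h.length ∧ (h.getD k d).2 = s₀ then
    if (h.getD (Nat.find H) d).1 ∈ R then
      φr (h.getD (Nat.find H) d).1 (h.drop (Nat.find H))
    else φ₀ h
  else φ₀ h

lemma getLast?_drop_of_lt {α : Type*} (l : List α) (k : ℕ) (hk : k < l.length) :
    (l.drop k).getLast? = l.getLast? := by
  rw [List.getLast?_eq_getElem?, List.getLast?_eq_getElem?, List.length_drop,
    List.getElem?_drop]
  congr 1
  omega


/-- Composition of strategies: if Éloïse wins from `(q, ⊥ u a)` the
conditional game relative to `R` (where reaching the stack `⊥u` for the first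
time in a state of `R` counts as a win), and for each `r ∈ R` she wins the
parity game from `(r, ⊥ u)`, then she wins the parity game from
`(q, ⊥ u a)`.  (Stacks are written top-first.) -/

theorem stmt8 {Q A : Type} (M : APDA Q A) (QE : Q → Prop) (ρ : Q → ℕ)
    (hfin : (Set.range ρ).Finite)
    (u : List A) (hu : M.bot ∉ u) (q : Q) (a : A) (ha : a ≠ M.bot) (R : Set Q)
    (hcond : Games.WinsFrom M.stepRel (fun c : Q × List A => QE c.1)
      (APDA.OmegaCondAt ρ (u ++ [M.bot]) R) (q, a :: u ++ [M.bot]))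
    (hwin : ∀ r ∈ R, M.WinsParity ρ QE (r, u ++ [M.bot])) :
    M.WinsParity ρ QE (q, a :: u ++ [M.bot]) := by
  classical
  obtain ⟨φ₀, hv0, hw0⟩ := hcond
  have hinh : Inhabited (Q × List A) := ⟨(q, [])⟩
  choose! φr hvr hwr using hwin
  set s₀ : List A := u ++ [M.bot] with hs₀def
  set d : Q × List A := (q, []) with hddef
  refine ⟨compStrat d s₀ R φ₀ φr, ?_, ?_⟩
  · -- validity of the composed strategy
    intro h v hlast hQE
    unfold compStrat
    split_ifs with H hR
    · refine hvr _ hR (h.drop (Nat.find H)) v ?_ hQE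
      rw [getLast?_drop_of_lt h (Nat.find H) (Nat.find_spec H).1]
      exact hlast
    · exact hv0 h v hlast hQE
    · exact hv0 h v hlast hQE
  · intro p hplay hresp
    obtain ⟨hp0, hstep⟩ := hplay
    have hlen : ∀ m, (Games.hist p m).length = m + 1 := by
      intro m; simp [Games.hist]
    have hgetD : ∀ m k, k ≤ m → (Games.hist p m).getD k d = p k := by
      intro m k hk
      have hk' : k < ((List.range (m + 1)).map p).length := by
        simp; omega
      simp [Games.hist, List.getD_eq_getElem?_getD, List.getElem?_eq_getElem hk']
    by_cases hA : ∀ j, (p j).2 ≠ s₀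
    · -- the play never reaches stack s₀ : it respects φ₀ throughout
      have hrespφ0 : Games.Respects (fun c : Q × List A => QE c.1) φ₀ p := by
        intro m hm
        rw [hresp m hm]
        unfold compStrat
        rw [dif_neg]
        rintro ⟨k, hk, hks⟩
        rw [hlen] at hk
        rw [hgetD m k (Nat.lt_succ_iff.mp hk)] at hks
        exact hA k hks
      have := hw0 p ⟨hp0, hstep⟩ hrespφ0
      unfold APDA.OmegaCondAt at this
      rcases this with ⟨-, hpar⟩ | ⟨i, hi, -, -⟩
      · exact hpar
      · exact absurd hi (hA i)
    · push_neg at hA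
      have hEx : ∃ j, (p j).2 = s₀ := hA
      set i := Nat.find hEx with hidef
      have hi : (p i).2 = s₀ := Nat.find_spec hEx
      have hmin : ∀ j, j < i → (p j).2 ≠ s₀ := fun j hj => Nat.find_min hEx hj
      set r := (p i).1 with hrdef
      have hHm : ∀ m, i ≤ m →
          ∃ k, k < (Games.hist p m).length ∧ ((Games.hist p m).getD k d).2 = s₀ := by
        intro m him
        exact ⟨i, by rw [hlen]; omega, by rw [hgetD m i him]; exact hi⟩
      have hfind : ∀ m, i ≤ m →
          ∀ (H : ∃ k, k < (Games.hist p m).length ∧ ((Games.hist p m).getD k d).2 = s₀),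
          Nat.find H = i := by
        intro m him H
        rw [Nat.find_eq_iff]
        refine ⟨⟨by rw [hlen]; omega, by rw [hgetD m i him]; exact hi⟩, ?_⟩
        rintro k hk ⟨hk1, hk2⟩
        rw [hlen] at hk1
        rw [hgetD m k (by omega)] at hk2
        exact hmin k hk hk2
      by_cases hR : r ∈ R
      · -- switch to the winning strategy φr r at time i
        have hdropHist : ∀ j,
            (Games.hist p (i + j)).drop i = Games.hist (fun n => p (i + n)) j := by
          intro j
          apply List.ext_getElem
          · simp [Games.hist]; omega
          · intro n h1 h2
            simp [Games.hist]
        have hresp' : Games.Respects (fun c : Q × List A => QE c.1) (φr r)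
            (fun n => p (i + n)) := by
          intro j hj
          show p (i + (j + 1)) = φr r (Games.hist (fun n => p (i + n)) j)
          have h1 : p ((i + j) + 1) = compStrat d s₀ R φ₀ φr (Games.hist p (i + j)) :=
            hresp (i + j) hj
          have h2 : i + (j + 1) = (i + j) + 1 := by omega
          rw [h2, h1]
          unfold compStrat
          rw [dif_pos (hHm (i + j) (Nat.le_add_right i j))]
          rw [hfind (i + j) (Nat.le_add_right i j)]
          rw [hgetD (i + j) i (Nat.le_add_right i j)]
          rw [if_pos hR, hdropHist j]
        have hplay' : Games.IsPlay M.stepRel (r, s₀) (fun n => p (i + n)) := by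
          constructor
          · show p (i + 0) = (r, s₀)
            rw [Nat.add_zero, hrdef, ← hi]
          · intro n
            show M.stepRel (p (i + n)) (p (i + (n + 1)))
            have h2 : i + (n + 1) = (i + n) + 1 := by omega
            rw [h2]
            exact hstep (i + n)
        have hpar' := hwr r hR (fun n => p (i + n)) hplay' hresp'
        unfold Games.ParityWin at hpar' ⊢
        have heq : (fun n => ρ (p (i + n)).1) = fun n => ρ (p (n + i)).1 := by
          funext n; rw [Nat.add_comm]
        rw [show (fun n => ρ ((fun n => p (i + n)) n).1) = fun n => ρ (p (n + i)).1 by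
          funext n; simp [Nat.add_comm]] at hpar'
        have hadd : Filter.liminf (fun n => ρ (p (n + i)).1) Filter.atTop
            = Filter.liminf (fun n => ρ (p n).1) Filter.atTop :=
          Filter.liminf_nat_add (fun m => ρ (p m).1) i
        rw [hadd] at hpar'
        exact hpar'
      · -- contradiction: the play respects φ₀ entirely, forcing r ∈ R
        exfalso
        have hrespφ0 : Games.Respects (fun c : Q × List A => QE c.1) φ₀ p := by
          intro m hm
          rw [hresp m hm]
          unfold compStrat
          by_cases him : i ≤ m
          · rw [dif_pos (hHm m him), hfind m him,
              if_neg (by rw [hgetD m i him]; exact hR)]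
          · rw [dif_neg]
            rintro ⟨k, hk1, hk2⟩
            rw [hlen] at hk1
            rw [hgetD m k (by omega)] at hk2
            exact hmin k (by omega) hk2
        have := hw0 p ⟨hp0, hstep⟩ hrespφ0
        unfold APDA.OmegaCondAt at this
        rcases this with ⟨hne, -⟩ | ⟨i', hi', hmin', hR'⟩
        · exact hne i hi
        · have h1 : i ≤ i' := Nat.find_min' hEx hi'
          have h2 : ¬ i < i' := fun h => hmin' i h hi
          have : i' = i := by omega
          rw [this] at hR'
          exact hR hR'
end
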